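/- Let G = G₀ *_H G₁ be a nondegenerate free product with amalgamation and assume H is finite. Then the following are equivalent: (i) G is icc; (ii) ker G = {e}; (iii) K₀ = K₁ = {e}; (iv) G is a Powers group; (v) there exists g ∈ G such that H ∩ gHg⁻¹ = {e}; (vi) G has the free semigroup property. -/

import Mathlib

variable {G : Type*} [Group G]

/-- `AltWord G₀ G₁ H j w`: the list `w` is an alternating word whose `i`-th letter lies in
`G_{(i+j) mod 2} \ H`. -/
def AltWord (G₀ G₁ H : Subgroup G) (j : ℕ) (w : List G) : Prop :=
  ∀ (i : ℕ) (hi : i < w.length),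
    w.get ⟨i, hi⟩ ∈ (if (i + j) % 2 = 0 then (G₀ : Set G) else (G₁ : Set G)) \ (H : Set G)

/-- `G` is the free product of its subgroups `G₀` and `G₁` amalgamated over their common
subgroup `H` (internal characterization: `G₀ ∩ G₁ = H`, the subgroups `G₀` and `G₁` generate
`G`, and no nonempty alternating word with letters in `G₀ \ H` and `G₁ \ H` has product
in `H`). -/
structure IsAmalgam (G₀ G₁ H : Subgroup G) : Prop where
  le_left : H ≤ G₀
  le_right : H ≤ G₁
  inf_eq : G₀ ⊓ G₁ = H
  closure_eq_top : Subgroup.closure ((G₀ : Set G) ∪ (G₁ : Set G)) = ⊤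
  reduced : ∀ (j : ℕ) (w : List G), w ≠ [] → AltWord G₀ G₁ H j w → w.prod ∉ H

/-- The amalgam `G₀ *_H G₁` is *nondegenerate*: `([G₀ : H] − 1) · ([G₁ : H] − 1) ≥ 2`,
i.e. `H` is a proper subgroup of both `G₀` and `G₁`, and has index at least `3` (possibly
infinite) in at least one of them. -/
def Nondegenerate (G₀ G₁ H : Subgroup G) : Prop :=
  H.relIndex G₀ ≠ 1 ∧ H.relIndex G₁ ≠ 1 ∧ ¬(H.relIndex G₀ = 2 ∧ H.relIndex G₁ = 2)

/-- `T_{j,k}`: the set of elements of `G` that are products of alternating words of length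
`k` whose first letter lies in `G_j \ H`; by convention `T_{j,0} = H`. -/
def TT (G₀ G₁ H : Subgroup G) (j k : ℕ) : Set G :=
  if k = 0 then (H : Set G)
  else {g | ∃ w : List G, w.length = k ∧ AltWord G₀ G₁ H j w ∧ w.prod = g}

/-- `C_{j,k} = ⋂_{g ∈ T_{j,k}} g H g⁻¹`. -/
def CC (G₀ G₁ H : Subgroup G) (j k : ℕ) : Set G :=
  ⋂ g ∈ TT G₀ G₁ H j k, {x | g⁻¹ * x * g ∈ H}

/-- `K_j = ⋂_{k ≥ 0} C_{j,k}`. -/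
def KK (G₀ G₁ H : Subgroup G) (j : ℕ) : Set G :=
  ⋂ k : ℕ, CC G₀ G₁ H j k

/-- The kernel of the amalgam, `ker G = ⋂_{g ∈ G} g H g⁻¹`, as a set. -/
def amalgamKerSet (H : Subgroup G) : Set G :=
  ⋂ g : G, {x | g⁻¹ * x * g ∈ H}

/-- A group `G` is a *Powers group* if for every finite subset `F` of `G \ {e}` and every
integer `k ≥ 1` there exist a partition `G = D ⊔ E` and elements `g 1, …, g k ∈ G` such that
`f D ∩ D = ∅` for all `f ∈ F` and `g i E ∩ g j E = ∅` for all distinct `1 ≤ i, j ≤ k`. -/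
def IsPowersGroup (G : Type*) [Group G] : Prop :=
  ∀ F : Finset G, (1 : G) ∉ F → ∀ k : ℕ, 1 ≤ k →
    ∃ (D E : Set G) (g : ℕ → G),
      D ∪ E = Set.univ ∧ D ∩ E = ∅ ∧
      (∀ f ∈ F, ((fun x => f * x) '' D) ∩ D = ∅) ∧
      (∀ i j, 1 ≤ i → i ≤ k → 1 ≤ j → j ≤ k → i ≠ j →
        ((fun x => g i * x) '' E) ∩ ((fun x => g j * x) '' E) = ∅)

/-- A group `G` has the *free semigroup property* if for every finite subset `F` of `G`
there exists `g ∈ G` such that `g F` is semifree: distinct nonempty formal words in the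
elements of `g F` define distinct elements of `G`. -/
def HasFreeSemigroupProperty (G : Type*) [Group G] : Prop :=
  ∀ F : Finset G, ∃ g : G,
    ∀ w₁ w₂ : List G, w₁ ≠ [] → w₂ ≠ [] →
      (∀ x ∈ w₁, x ∈ (fun f => g * f) '' (F : Set G)) →
      (∀ x ∈ w₂, x ∈ (fun f => g * f) '' (F : Set G)) →
      w₁.prod = w₂.prod → w₁ = w₂

/-- A group `G` is *icc* if every conjugacy class of `G` other than `{e}` is infinite. -/
def IsIcc (G : Type*) [Group G] : Prop :=
  ∀ g : G, g ≠ 1 → {x : G | ∃ y : G, y * g * y⁻¹ = x}.Infinite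

/-!
Every element of `G₀ *_H G₁` has a reduced word; its length and, for positive length, the factor
containing its first letter are invariants. `TT G₀ G₁ H j k` collects the elements of length `k`
starting in `side G₀ G₁ j`, and products and inverses of such elements are computed by
concatenation.

Finiteness of `H` enters by counting. Conjugation by a letter of `G_j` maps `K_j` into `K_{j+1}`,
so `K_0` and `K_1` have the same size and their union is normalized by `G`, hence lies in `ker G`.
If `H ∩ u H u⁻¹` has minimal size, no longer reduced word through `u` shrinks it, which puts
`u⁻¹ (H ∩ u H u⁻¹) u` inside `K_0 ∪ K_1`.

From some `τ` with `H ∩ τ H τ⁻¹ = 1` and a factor `G_p` in which `H` has index at least `3`, any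
finite set of nontrivial elements is conjugated simultaneously into the odd-length reduced words
beginning and ending in `G_p`. These map every element not beginning in `G_p` to one that does;
this ping-pong gives both Powers' property and free subsemigroups. Conversely, Powers groups are
icc, and neither icc groups nor groups with the free semigroup property have a nontrivial finite
normal subgroup such as `ker G ≤ H`.
-/

/-! ### Finite normal subgroups and ping-pong criteria -/

theorem IsIcc.eq_bot_of_finite (hG : IsIcc G) {N : Subgroup G} [hN : N.Normal]
    (hfin : (N : Set G).Finite) : N = ⊥ := by
  refine (Subgroup.eq_bot_iff_forall N).2 fun x hx => ?_
  by_contra hx1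
  exact hG x hx1 (hfin.subset (by rintro _ ⟨y, rfl⟩; exact hN.conj_mem x hx y))

theorem Subgroup.Normal.inv_pow_mul_prod_mem {N : Subgroup G} (hN : N.Normal) {g : G} :
    ∀ {w : List G}, (∀ a ∈ w, g⁻¹ * a ∈ N) → (g ^ w.length)⁻¹ * w.prod ∈ N
  | [], _ => by simp
  | a :: w, hw => by
    have e : (g ^ (a :: w).length)⁻¹ * (a :: w).prod =
        (g ^ w.length)⁻¹ * (g⁻¹ * a) * g ^ w.length * ((g ^ w.length)⁻¹ * w.prod) := by
      simp only [List.length_cons, List.prod_cons, pow_succ']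
      group
    rw [e]
    exact N.mul_mem (hN.conj_mem' _ (hw a (by simp)) _)
      (hN.inv_pow_mul_prod_mem fun b hb => hw b (by simp [hb]))

theorem HasFreeSemigroupProperty.eq_bot_of_finite (hG : HasFreeSemigroupProperty G)
    {N : Subgroup G} [hN : N.Normal] (hfin : (N : Set G).Finite) : N = ⊥ := by
  classical
  refine (Subgroup.eq_bot_iff_forall N).2 fun x hx => ?_
  by_contra hx1
  obtain ⟨g, hg⟩ := hG {1, x}
  let ℓ : Bool → G := fun b => g * bif b then x else 1
  have hℓ : Function.Injective ℓ := by
    intro b b' h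
    cases b <;> cases b' <;> simp_all [ℓ, eq_comm]
  have hword : ∀ {L} (f : Fin L → Bool), ∀ a ∈ (List.ofFn f).map ℓ,
      a ∈ (fun f => g * f) '' (({1, x} : Finset G) : Set G) ∧ g⁻¹ * a ∈ N := by
    intro L f a ha
    obtain ⟨b, -, rfl⟩ := List.mem_map.1 ha
    cases b <;> simp [ℓ, hx]
  -- the `2 ^ L` words of length `L` in `g` and `g * x` are distinct, yet all lie in `g ^ L • N`
  have : Finite N := hfin.to_subtype
  set L := Nat.card N + 1
  let Φ : (Fin L → Bool) → N := fun f =>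
    ⟨(g ^ L)⁻¹ * ((List.ofFn f).map ℓ).prod,
      by simpa using hN.inv_pow_mul_prod_mem fun a ha => (hword f a ha).2⟩
  have hΦ : Function.Injective Φ := by
    intro f f' h
    have hprod : ((List.ofFn f).map ℓ).prod = ((List.ofFn f').map ℓ).prod := by
      simpa [Φ] using congrArg Subtype.val h
    refine List.ofFn_injective (List.map_injective_iff.2 hℓ (hg _ _ ?_ ?_
      (fun a ha => (hword f a ha).1) (fun a ha => (hword f' a ha).1) hprod)) <;> simp [L]
  have hcard := Nat.card_le_card_of_injective Φ hΦ
  rw [Nat.card_fun, Nat.card_eq_fintype_card, Fintype.card_bool, Nat.card_fin] at hcard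
  exact absurd hcard (not_le.2 ((Nat.lt_succ_self _).trans Nat.lt_two_pow_self))

theorem IsPowersGroup.isIcc (hG : IsPowersGroup G) : IsIcc G := by
  intro x hx hfin
  obtain ⟨D, E, g, hDE, -, hD, hE⟩ := hG hfin.toFinset (by simpa using hx) 3 (by norm_num)
  -- `f = (g i)⁻¹ * x * g i ∈ F` maps `(g i)⁻¹` to `(g i)⁻¹ * x`, so not both lie in `D`
  have hE' : ∀ i, (g i)⁻¹ * 1 ∈ E ∨ (g i)⁻¹ * x ∈ E := by
    intro i
    by_contra! h
    have hmem : ∀ y, y ∉ E → y ∈ D := fun y hy =>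
      ((Set.ext_iff.1 hDE y).2 trivial).resolve_right hy
    refine (Set.eq_empty_iff_forall_notMem.1 (hD ((g i)⁻¹ * x * g i) ?_)) ((g i)⁻¹ * x)
      ⟨⟨(g i)⁻¹, by simpa using hmem _ h.1, by group⟩, hmem _ h.2⟩
    simpa using ⟨(g i)⁻¹, by group⟩
  have hdisj : ∀ i j, 1 ≤ i → i < j → j ≤ 3 → ∀ z, (g i)⁻¹ * z ∈ E → (g j)⁻¹ * z ∉ E :=
    fun i j hi hij hj z h h' => Set.eq_empty_iff_forall_notMem.1
      (hE i j hi (by omega) (by omega) hj hij.ne) z ⟨⟨_, h, by group⟩, ⟨_, h', by group⟩⟩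
  rcases hE' 1 with h1 | h1 <;> rcases hE' 2 with h2 | h2 <;> rcases hE' 3 with h3 | h3 <;>
  first
    | exact hdisj 1 2 le_rfl one_lt_two (by norm_num) _ h1 h2
    | exact hdisj 1 3 le_rfl (by norm_num) le_rfl _ h1 h3
    | exact hdisj 2 3 one_le_two (by norm_num) le_rfl _ h2 h3

theorem isPowersGroup_of_pingPong {A D E : Set G} (g : ℕ → G)
    (hcover : ∀ x, x ∈ D ∨ x ∈ E) (hdisj : ∀ x ∈ D, x ∉ E)
    (hA : ∀ a ∈ A, ∀ x ∈ D, a * x ∈ E) (hg : ∀ i j, i ≠ j → ∀ x ∈ E, ∀ y ∈ E, g i * x ≠ g j * y)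
    (hconj : ∀ F : Finset G, 1 ∉ F → ∃ d, ∀ f ∈ F, d⁻¹ * f * d ∈ A) : IsPowersGroup G := by
  intro F h1F k _
  obtain ⟨d, hd⟩ := hconj F h1F
  refine ⟨(d * ·) '' D, (d * ·) '' E, fun i => d * g i * d⁻¹, ?_, ?_, ?_, ?_⟩
  · refine Set.eq_univ_of_forall fun y => ?_
    rcases hcover (d⁻¹ * y) with h | h
    · exact Or.inl ⟨_, h, by group⟩
    · exact Or.inr ⟨_, h, by group⟩
  · refine Set.eq_empty_of_forall_notMem ?_
    rintro _ ⟨⟨x, hx, rfl⟩, y, hy, hxy⟩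
    obtain rfl := mul_left_cancel hxy
    exact hdisj y hx hy
  · refine fun f hf => Set.eq_empty_of_forall_notMem ?_
    rintro _ ⟨⟨_, ⟨x, hx, rfl⟩, rfl⟩, y, hy, hxy⟩
    refine hdisj y hy ?_
    have : y = (d⁻¹ * f * d) * x := by
      rw [← mul_right_inj d, show d * y = f * (d * x) from hxy]; group
    exact this ▸ hA _ (hd f hf) x hx
  · intro i j _ _ _ _ hij
    refine Set.eq_empty_of_forall_notMem ?_
    rintro _ ⟨⟨_, ⟨x, hx, rfl⟩, rfl⟩, _, ⟨y, hy, rfl⟩, hxy⟩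
    exact hg i j hij x hx y hy (by simpa [mul_assoc] using hxy.symm)

theorem eq_of_prod_eq_of_pingPong {S Y : Set G} (hY : 1 ∈ Y)
    (hmaps : ∀ a ∈ S, ∀ y ∈ Y, a * y ∈ Y ∧ a * y ≠ 1)
    (hdisj : ∀ a ∈ S, ∀ a' ∈ S, ∀ y ∈ Y, ∀ y' ∈ Y, a * y = a' * y' → a = a') :
    ∀ {w₁ w₂ : List G}, (∀ x ∈ w₁, x ∈ S) → (∀ x ∈ w₂, x ∈ S) → w₁.prod = w₂.prod → w₁ = w₂ := by
  have hprod : ∀ w : List G, (∀ x ∈ w, x ∈ S) → w.prod ∈ Y := by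
    intro w hw
    induction w with
    | nil => exact hY
    | cons a w ih => exact (hmaps a (hw a (by simp)) _ (ih fun x hx => hw x (by simp [hx]))).1
  intro w₁
  induction w₁ with
  | nil =>
    rintro (_ | ⟨a, w⟩) - hw h
    · rfl
    · exact absurd h.symm (hmaps a (hw a (by simp)) _ (hprod w fun x hx => hw x (by simp [hx]))).2
  | cons a w₁ ih =>
    rintro (_ | ⟨a', w₂⟩) hw₁ hw₂ h
    · exact absurd h (hmaps a (hw₁ a (by simp)) _ (hprod w₁ fun x hx => hw₁ x (by simp [hx]))).2
    · have hS₁ : ∀ x ∈ w₁, x ∈ S := fun x hx => hw₁ x (by simp [hx])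
      have hS₂ : ∀ x ∈ w₂, x ∈ S := fun x hx => hw₂ x (by simp [hx])
      obtain rfl := hdisj a (hw₁ a (by simp)) a' (hw₂ a' (by simp)) _ (hprod w₁ hS₁) _
        (hprod w₂ hS₂) h
      rw [ih hS₁ hS₂ (mul_left_cancel h)]

theorem eq_of_prod_eq_of_conj_pingPong {S Y : Set G} (s : G) (hY : 1 ∈ Y)
    (hmaps : ∀ a ∈ S, ∀ y ∈ Y, s⁻¹ * a * s * y ∈ Y ∧ s⁻¹ * a * s * y ≠ 1)
    (hdisj : ∀ a ∈ S, ∀ a' ∈ S, ∀ y ∈ Y, ∀ y' ∈ Y, s⁻¹ * a * s * y = s⁻¹ * a' * s * y' → a = a')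
    {w₁ w₂ : List G} (hw₁ : ∀ x ∈ w₁, x ∈ S) (hw₂ : ∀ x ∈ w₂, x ∈ S) (h : w₁.prod = w₂.prod) :
    w₁ = w₂ := by
  have hconj : ∀ a, MulAut.conj s⁻¹ a = s⁻¹ * a * s := fun a => by simp
  have hS : ∀ w : List G, (∀ x ∈ w, x ∈ S) →
      ∀ x ∈ w.map (MulAut.conj s⁻¹), x ∈ MulAut.conj s⁻¹ '' S :=
    fun w hw x hx => by
      obtain ⟨a, ha, rfl⟩ := List.mem_map.1 hx
      exact ⟨a, hw a ha, rfl⟩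
  refine List.map_injective_iff.2 (MulAut.conj s⁻¹).injective
    (eq_of_prod_eq_of_pingPong hY ?_ ?_ (hS w₁ hw₁) (hS w₂ hw₂)
      (by rw [← map_list_prod, ← map_list_prod, h]))
  · rintro _ ⟨a, ha, rfl⟩
    simpa only [hconj] using hmaps a ha
  · rintro _ ⟨a, ha, rfl⟩ _ ⟨a', ha', rfl⟩ y hy y' hy' e
    rw [hdisj a ha a' ha' y hy y' hy' (by simpa only [hconj] using e)]

/-! ### Reduced words -/

def side (G₀ G₁ : Subgroup G) (j : ℕ) : Subgroup G := if j % 2 = 0 then G₀ else G₁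

section Words

variable {G₀ G₁ H : Subgroup G} {j j' k m n : ℕ} {x y : G}

theorem side_congr (h : j % 2 = j' % 2) : side G₀ G₁ j = side G₀ G₁ j' := by
  simp only [side, h]

theorem altWord_nil (j : ℕ) : AltWord G₀ G₁ H j [] := fun _ hi => absurd hi (Nat.not_lt_zero _)

theorem altWord_cons {a : G} {w : List G} :
    AltWord G₀ G₁ H j (a :: w) ↔ (a ∈ side G₀ G₁ j ∧ a ∉ H) ∧ AltWord G₀ G₁ H (j + 1) w := by
  have hside : ∀ i a, (a ∈ if i % 2 = 0 then (G₀ : Set G) else G₁) ↔ a ∈ side G₀ G₁ i :=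
    fun i a => by unfold side; split_ifs <;> rfl
  constructor
  · intro h
    refine ⟨by simpa [hside] using h 0 (by simp), fun i hi => ?_⟩
    simpa [show i + (j + 1) = i + 1 + j by omega] using h (i + 1) (by simpa using hi)
  · rintro ⟨h₀, h⟩ (_ | i) hi
    · simpa [hside] using h₀
    · simpa [show i + 1 + j = i + (j + 1) by omega] using h i (by simpa using hi)

theorem TT_congr (k : ℕ) (h : j % 2 = j' % 2) : TT G₀ G₁ H j k = TT G₀ G₁ H j' k := by
  have : ∀ i, (i + j) % 2 = (i + j') % 2 := fun i => by omega
  simp only [TT, AltWord, this]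

theorem mem_TT_of_mod (hx : x ∈ TT G₀ G₁ H j k) (h : j % 2 = j' % 2) : x ∈ TT G₀ G₁ H j' k := by
  rwa [← TT_congr k h]

theorem mem_TT_of_eq (hx : x ∈ TT G₀ G₁ H j k) (hj : j % 2 = j' % 2) (hk : k = m) :
    x ∈ TT G₀ G₁ H j' m :=
  hk ▸ mem_TT_of_mod hx hj

theorem mem_TT_zero : x ∈ TT G₀ G₁ H j 0 ↔ x ∈ H := by
  simp [TT]

theorem mem_TT_iff_of_ne_zero (hk : k ≠ 0) :
    x ∈ TT G₀ G₁ H j k ↔ ∃ w : List G, w.length = k ∧ AltWord G₀ G₁ H j w ∧ w.prod = x := by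
  simp [TT, hk]

theorem mem_TT_one : x ∈ TT G₀ G₁ H j 1 ↔ x ∈ side G₀ G₁ j ∧ x ∉ H := by
  rw [mem_TT_iff_of_ne_zero one_ne_zero]
  constructor
  · rintro ⟨_ | ⟨a, _ | _⟩, hlen, hw, rfl⟩ <;> simp at hlen
    simpa using (altWord_cons.1 hw).1
  · exact fun hx => ⟨[x], rfl, altWord_cons.2 ⟨hx, altWord_nil _⟩, by simp⟩


theorem Nondegenerate.exists_mem_TT_one (hnd : Nondegenerate G₀ G₁ H) (j : ℕ) :
    ∃ a, a ∈ TT G₀ G₁ H j 1 := by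
  have h : ¬ side G₀ G₁ j ≤ H := by
    unfold side
    split_ifs
    exacts [mt Subgroup.relIndex_eq_one.2 hnd.1, mt Subgroup.relIndex_eq_one.2 hnd.2.1]
  obtain ⟨a, ha, ha'⟩ := Set.not_subset.1 h
  exact ⟨a, mem_TT_one.2 ⟨ha, ha'⟩⟩

end Words

namespace IsAmalgam

variable {G₀ G₁ H : Subgroup G} {j j' k m n r : ℕ} {x y : G}

theorem le_side (ha : IsAmalgam G₀ G₁ H) (j : ℕ) : H ≤ side G₀ G₁ j := by
  unfold side
  split_ifs
  exacts [ha.le_left, ha.le_right]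

theorem mem_TT_succ (ha : IsAmalgam G₀ G₁ H) :
    x ∈ TT G₀ G₁ H j (k + 1) ↔
      ∃ a ∈ TT G₀ G₁ H j 1, ∃ y ∈ TT G₀ G₁ H (j + 1) k, x = a * y := by
  rw [mem_TT_iff_of_ne_zero k.succ_ne_zero]
  constructor
  · rintro ⟨_ | ⟨a, w⟩, hlen, hw, rfl⟩
    · simp at hlen
    rw [altWord_cons] at hw
    refine ⟨a, mem_TT_one.2 hw.1, w.prod, ?_, List.prod_cons⟩
    rcases Nat.eq_zero_or_pos k with rfl | hk
    · simp_all [mem_TT_zero]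
    · exact (mem_TT_iff_of_ne_zero hk.ne').2 ⟨w, by simpa using hlen, hw.2, rfl⟩
  · rintro ⟨a, ha', y, hy, rfl⟩
    rw [mem_TT_one] at ha'
    rcases Nat.eq_zero_or_pos k with rfl | hk
    · rw [mem_TT_zero] at hy
      refine ⟨[a * y], rfl, altWord_cons.2 ⟨⟨mul_mem ha'.1 (ha.le_side j hy), fun h => ha'.2 ?_⟩,
        altWord_nil _⟩, by simp⟩
      simpa using mul_mem h (inv_mem hy)
    · obtain ⟨w, hlen, hw, rfl⟩ := (mem_TT_iff_of_ne_zero hk.ne').1 hy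
      exact ⟨a :: w, by simp [hlen], altWord_cons.2 ⟨ha', hw⟩, List.prod_cons⟩

theorem notMem_of_mem_TT_succ (ha : IsAmalgam G₀ G₁ H) (hx : x ∈ TT G₀ G₁ H j (k + 1)) :
    x ∉ H := by
  obtain ⟨w, hlen, hw, rfl⟩ := (mem_TT_iff_of_ne_zero k.succ_ne_zero).1 hx
  exact ha.reduced j w (by rintro rfl; simp at hlen) hw

theorem mul_mem_TT (ha : IsAmalgam G₀ G₁ H) :
    ∀ {m j : ℕ} {x y : G}, x ∈ TT G₀ G₁ H j m → y ∈ TT G₀ G₁ H (j + m) n →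
      x * y ∈ TT G₀ G₁ H j (m + n)
  | 0, j, x, y, hx, hy => by
    rw [mem_TT_zero] at hx
    rw [zero_add]
    rcases n with _ | n
    · exact mem_TT_zero.2 (mul_mem hx (mem_TT_zero.1 hy))
    · obtain ⟨a, ha', y', hy', rfl⟩ := ha.mem_TT_succ.1 hy
      rw [mem_TT_one] at ha'
      refine ha.mem_TT_succ.2 ⟨x * a, mem_TT_one.2 ⟨mul_mem (ha.le_side _ hx) ha'.1,
        fun h => ha'.2 ?_⟩, y', hy', (mul_assoc _ _ _).symm⟩
      simpa using mul_mem (inv_mem hx) h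
  | m + 1, j, x, y, hx, hy => by
    obtain ⟨a, ha', x', hx', rfl⟩ := ha.mem_TT_succ.1 hx
    rw [show m + 1 + n = m + n + 1 by omega, ha.mem_TT_succ]
    exact ⟨a, ha', x' * y, ha.mul_mem_TT hx' (by rwa [show j + 1 + m = j + (m + 1) by omega]),
      mul_assoc _ _ _⟩

theorem inv_mem_TT (ha : IsAmalgam G₀ G₁ H) :
    ∀ {m j : ℕ} {x : G}, x ∈ TT G₀ G₁ H j m → x⁻¹ ∈ TT G₀ G₁ H (j + m + 1) m
  | 0, _, _, hx => mem_TT_zero.2 (inv_mem (mem_TT_zero.1 hx))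
  | m + 1, j, x, hx => by
    obtain ⟨a, ha', y, hy, rfl⟩ := ha.mem_TT_succ.1 hx
    rw [mem_TT_one] at ha'
    have ha'' : a⁻¹ ∈ TT G₀ G₁ H (j + 1 + m + 1 + m) 1 :=
      mem_TT_of_mod (mem_TT_one.2 ⟨inv_mem ha'.1, fun h => ha'.2 (by simpa using inv_mem h)⟩)
        (by omega)
    simpa [show j + 1 + m + 1 = j + (m + 1) + 1 by omega] using
      ha.mul_mem_TT (ha.inv_mem_TT hy) ha''

theorem mem_TT_succ' (ha : IsAmalgam G₀ G₁ H) :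
    x ∈ TT G₀ G₁ H j (k + 1) ↔
      ∃ y ∈ TT G₀ G₁ H j k, ∃ a ∈ TT G₀ G₁ H (j + k) 1, x = y * a := by
  refine ⟨fun hx => ?_, fun ⟨y, hy, a, ha', hx⟩ => hx ▸ ha.mul_mem_TT hy ha'⟩
  induction k generalizing j x with
  | zero => exact ⟨1, mem_TT_zero.2 (one_mem H), x, hx, (one_mul x).symm⟩
  | succ k ih =>
    obtain ⟨a, ha', z, hz, rfl⟩ := ha.mem_TT_succ.1 hx
    obtain ⟨y, hy, b, hb, rfl⟩ := ih hz
    exact ⟨a * y, by simpa [add_comm] using ha.mul_mem_TT ha' hy, b,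
      by rwa [show j + 1 + k = j + (k + 1) by omega] at hb, (mul_assoc _ _ _).symm⟩

theorem mul_mem_TT_of_mem_side (ha : IsAmalgam G₀ G₁ H) {g : G} (hg : g ∈ side G₀ G₁ j)
    (hx : x ∈ TT G₀ G₁ H j (m + 1)) :
    g * x ∈ TT G₀ G₁ H j (m + 1) ∨ g * x ∈ TT G₀ G₁ H (j + 1) m := by
  obtain ⟨a, ha', y, hy, rfl⟩ := ha.mem_TT_succ.1 hx
  rw [mem_TT_one] at ha'
  rw [← mul_assoc]
  by_cases hga : g * a ∈ H
  · exact Or.inr (by simpa using ha.mul_mem_TT (mem_TT_zero.2 hga) (by simpa using hy))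
  · have hga' : g * a ∈ TT G₀ G₁ H j 1 := mem_TT_one.2 ⟨mul_mem hg ha'.1, hga⟩
    exact Or.inl (by simpa [add_comm] using ha.mul_mem_TT hga' hy)

theorem mul_induction (ha : IsAmalgam G₀ G₁ H) {P : G → Prop} (one : P 1)
    (mul : ∀ j, ∀ g ∈ side G₀ G₁ j, ∀ x, P x → P (g * x)) (x : G) : P x := by
  have hx : x ∈ Subgroup.closure ((G₀ : Set G) ∪ G₁) := ha.closure_eq_top ▸ Subgroup.mem_top x
  have hside : ∀ g ∈ (G₀ : Set G) ∪ G₁, g ∈ side G₀ G₁ 0 ∨ g ∈ side G₀ G₁ 1 := by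
    rintro g (hg | hg) <;> simp_all [side]
  induction hx using Subgroup.closure_induction_left with
  | one => exact one
  | mul_left g hg y _ ih => exact (hside g hg).elim (mul 0 g · y ih) (mul 1 g · y ih)
  | inv_mul_cancel g hg y _ ih =>
    exact (hside g hg).elim (fun h => mul 0 _ (inv_mem h) y ih) (fun h => mul 1 _ (inv_mem h) y ih)

theorem exists_mem_TT (ha : IsAmalgam G₀ G₁ H) (x : G) : ∃ j m, x ∈ TT G₀ G₁ H j m := by
  refine ha.mul_induction (P := fun x => ∃ j m, x ∈ TT G₀ G₁ H j m)
    ⟨0, 0, mem_TT_zero.2 (one_mem H)⟩ ?_ x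
  rintro i g hg x ⟨j, m, hx⟩
  by_cases hgH : g ∈ H
  · exact ⟨j, m, by simpa using ha.mul_mem_TT (mem_TT_zero.2 hgH) (by simpa using hx)⟩
  have hg' : g ∈ TT G₀ G₁ H i 1 := mem_TT_one.2 ⟨hg, hgH⟩
  rcases m with _ | m
  · exact ⟨i, 1 + 0, ha.mul_mem_TT hg' (mem_TT_zero.2 (mem_TT_zero.1 hx))⟩
  by_cases hij : i % 2 = j % 2
  · rcases ha.mul_mem_TT_of_mem_side (by rwa [side_congr hij] at hg) hx with h | h
    exacts [⟨j, _, h⟩, ⟨j + 1, _, h⟩]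
  · exact ⟨i, _, ha.mul_mem_TT hg' (mem_TT_of_mod hx (by omega))⟩

theorem mod_eq_of_mem_TT (ha : IsAmalgam G₀ G₁ H) (hx : x ∈ TT G₀ G₁ H j (m + 1))
    (hx' : x ∈ TT G₀ G₁ H j' (n + 1)) : j % 2 = j' % 2 := by
  by_contra h
  have := ha.mul_mem_TT (ha.inv_mem_TT hx) (mem_TT_of_mod hx' (j' := j + (m + 1) + 1 + (m + 1))
    (by omega))
  rw [inv_mul_cancel, show m + 1 + (n + 1) = m + n + 1 + 1 by omega] at this
  exact ha.notMem_of_mem_TT_succ this (one_mem H)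

theorem eq_of_mem_TT (ha : IsAmalgam G₀ G₁ H) :
    ∀ {m n j j' : ℕ} {x : G}, x ∈ TT G₀ G₁ H j m → x ∈ TT G₀ G₁ H j' n → m = n
  | 0, 0, _, _, _, _, _ => rfl
  | 0, _ + 1, _, _, _, hx, hx' => absurd (mem_TT_zero.1 hx) (ha.notMem_of_mem_TT_succ hx')
  | _ + 1, 0, _, _, _, hx, hx' => absurd (mem_TT_zero.1 hx') (ha.notMem_of_mem_TT_succ hx)
  | m + 1, n + 1, j, j', x, hx, hx' => by
    obtain ⟨a, ha', y, hy, rfl⟩ := ha.mem_TT_succ.1 hx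
    have hmod := ha.mod_eq_of_mem_TT hx hx'
    have hya : a⁻¹ * (a * y) = y := inv_mul_cancel_left a y
    rcases ha.mul_mem_TT_of_mem_side (inv_mem (mem_TT_one.1 ha').1)
      (mem_TT_of_mod hx' hmod.symm) with h | h
    · rw [hya] at h
      rcases m with _ | m
      · exact absurd (mem_TT_zero.1 hy) (ha.notMem_of_mem_TT_succ h)
      · have := ha.mod_eq_of_mem_TT hy h
        omega
    · rw [hya] at h
      rw [ha.eq_of_mem_TT hy h]

theorem conj_mem_TT_odd (ha : IsAmalgam G₀ G₁ H) {v : G} (hx : x ∈ TT G₀ G₁ H k (2 * r + 1))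
    (hv : v ∈ TT G₀ G₁ H (k + 1) n) : v⁻¹ * x * v ∈ TT G₀ G₁ H (k + n) (2 * (n + r) + 1) := by
  have h₁ := ha.mul_mem_TT (ha.inv_mem_TT hv) (mem_TT_of_mod hx (by omega))
  have h₂ := ha.mul_mem_TT h₁ (mem_TT_of_mod hv (by omega))
  exact mem_TT_of_mod (by rwa [show n + (2 * r + 1) + n = 2 * (n + r) + 1 by omega] at h₂)
    (by omega)

theorem conj_mem_or_mem_TT_odd (ha : IsAmalgam G₀ G₁ H) {u : G} (hx : x ∈ H) :
    ∀ {m : ℕ}, u ∈ TT G₀ G₁ H j m →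
      u⁻¹ * x * u ∈ H ∨ ∃ r, u⁻¹ * x * u ∈ TT G₀ G₁ H (j + m + 1) (2 * r + 1)
  | 0, hu => Or.inl (by
      have hu := mem_TT_zero.1 hu
      exact mul_mem (mul_mem (inv_mem hu) hx) hu)
  | m + 1, hu => by
    obtain ⟨u', hu', a, ha', rfl⟩ := ha.mem_TT_succ'.1 hu
    have e : (u' * a)⁻¹ * x * (u' * a) = a⁻¹ * (u'⁻¹ * x * u') * a := by group
    rw [e]
    rcases ha.conj_mem_or_mem_TT_odd hx hu' with h | ⟨r, h⟩
    · rw [mem_TT_one] at ha'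
      by_cases h' : a⁻¹ * (u'⁻¹ * x * u') * a ∈ H
      · exact Or.inl h'
      · refine Or.inr ⟨0, mem_TT_of_mod (j := j + m) (mem_TT_one.2 ⟨?_, h'⟩) (by omega)⟩
        exact mul_mem (mul_mem (inv_mem ha'.1) (ha.le_side _ h)) ha'.1
    · exact Or.inr ⟨1 + r, mem_TT_of_mod
        (ha.conj_mem_TT_odd h (mem_TT_of_mod (j' := j + m + 1 + 1) ha' (by omega))) (by omega)⟩

theorem conj_mem_of_conj_mul_mem (ha : IsAmalgam G₀ G₁ H) {u v : G} (hx : x ∈ H)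
    (hu : u ∈ TT G₀ G₁ H j m) (hv : v ∈ TT G₀ G₁ H (j + m) n)
    (huv : (u * v)⁻¹ * x * (u * v) ∈ H) : u⁻¹ * x * u ∈ H := by
  refine (ha.conj_mem_or_mem_TT_odd hx hu).resolve_right fun ⟨r, h⟩ => ?_
  refine ha.notMem_of_mem_TT_succ (ha.conj_mem_TT_odd h (mem_TT_of_mod hv (by omega))) ?_
  simpa [mul_assoc] using huv

end IsAmalgam

/-! ### The kernel and the subgroups `K_j` -/

section Kernel

variable {G₀ G₁ H : Subgroup G} {j j' m : ℕ} {x : G}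

theorem amalgamKerSet_eq_one_iff : amalgamKerSet H = {1} ↔ H.normalCore = ⊥ := by
  have : amalgamKerSet H = H.normalCore := by
    ext x
    simp only [amalgamKerSet, Set.mem_iInter, SetLike.mem_coe]
    change (∀ g : G, g⁻¹ * x * g ∈ H) ↔ ∀ b : G, b * x * b⁻¹ ∈ H
    exact ⟨fun h b => by simpa using h b⁻¹, fun h g => by simpa using h g⁻¹⟩
  rw [this, ← Subgroup.coe_bot, SetLike.coe_set_eq]

theorem mem_KK_iff : x ∈ KK G₀ G₁ H j ↔ ∀ k, ∀ g ∈ TT G₀ G₁ H j k, g⁻¹ * x * g ∈ H := by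
  simp [KK, CC]

theorem KK_subset : KK G₀ G₁ H j ⊆ H := fun x hx => by
  simpa using mem_KK_iff.1 hx 0 1 (mem_TT_zero.2 (one_mem H))

theorem one_mem_KK : (1 : G) ∈ KK G₀ G₁ H j :=
  mem_KK_iff.2 fun _ g _ => by simp

theorem KK_congr (h : j % 2 = j' % 2) : KK G₀ G₁ H j = KK G₀ G₁ H j' := by
  simp only [KK, CC, TT_congr _ h]

theorem IsAmalgam.conj_mem_KK (ha : IsAmalgam G₀ G₁ H) {g : G} (hx : x ∈ KK G₀ G₁ H j)
    (hg : g ∈ TT G₀ G₁ H j m) : g⁻¹ * x * g ∈ KK G₀ G₁ H (j + m) :=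
  mem_KK_iff.2 fun _ g' hg' => by
    simpa [mul_assoc] using mem_KK_iff.1 hx _ _ (ha.mul_mem_TT hg hg')

theorem IsAmalgam.image_conj_KK (ha : IsAmalgam G₀ G₁ H) (hnd : Nondegenerate G₀ G₁ H)
    (hfin : (H : Set G).Finite) {c : G} (hc : c ∈ TT G₀ G₁ H j 1) :
    (fun x => c⁻¹ * x * c) '' KK G₀ G₁ H j = KK G₀ G₁ H (j + 1) := by
  have hinj : ∀ c : G, Function.Injective fun x : G => c⁻¹ * x * c := fun c x y h => by
    simpa using h
  have hsub : ∀ {j} {c : G}, c ∈ TT G₀ G₁ H j 1 →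
      (fun x => c⁻¹ * x * c) '' KK G₀ G₁ H j ⊆ KK G₀ G₁ H (j + 1) := by
    rintro j c hc _ ⟨x, hx, rfl⟩
    exact ha.conj_mem_KK hx hc
  have hle : ∀ j, (KK G₀ G₁ H j).ncard ≤ (KK G₀ G₁ H (j + 1)).ncard := fun j => by
    obtain ⟨a, ha⟩ := hnd.exists_mem_TT_one j
    rw [← Set.ncard_image_of_injective _ (hinj a)]
    exact Set.ncard_le_ncard (hsub ha) (hfin.subset KK_subset)
  refine Set.eq_of_subset_of_ncard_le (hsub hc) ?_ (hfin.subset KK_subset)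
  rw [Set.ncard_image_of_injective _ (hinj c)]
  calc (KK G₀ G₁ H (j + 1)).ncard ≤ (KK G₀ G₁ H (j + 2)).ncard := hle _
    _ = (KK G₀ G₁ H j).ncard := by rw [KK_congr (j' := j) (by omega)]

theorem IsAmalgam.exists_conj_mem_KK (ha : IsAmalgam G₀ G₁ H) (hnd : Nondegenerate G₀ G₁ H)
    (hfin : (H : Set G).Finite) {i : ℕ} {c : G} (hc : c ∈ side G₀ G₁ i)
    (hx : x ∈ KK G₀ G₁ H j) : ∃ j', c⁻¹ * x * c ∈ KK G₀ G₁ H j' := by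
  by_cases hcH : c ∈ H
  · exact ⟨j + 0, ha.conj_mem_KK hx (mem_TT_zero.2 hcH)⟩
  by_cases hij : i % 2 = j % 2
  · exact ⟨j + 1, ha.conj_mem_KK hx (mem_TT_of_mod (mem_TT_one.2 ⟨hc, hcH⟩) hij)⟩
  · have hc' : c⁻¹ ∈ TT G₀ G₁ H (j + 1) 1 :=
      mem_TT_of_mod (mem_TT_one.2 ⟨inv_mem hc, by simpa using hcH⟩) (by omega)
    rw [KK_congr (show j % 2 = (j + 1 + 1) % 2 by omega), ← ha.image_conj_KK hnd hfin hc'] at hx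
    obtain ⟨y, hy, rfl⟩ := hx
    exact ⟨j + 1, by simpa [mul_assoc] using hy⟩

theorem IsAmalgam.KK_eq_one (ha : IsAmalgam G₀ G₁ H) (hnd : Nondegenerate G₀ G₁ H)
    (hfin : (H : Set G).Finite) (hker : amalgamKerSet H = {1}) (j : ℕ) :
    KK G₀ G₁ H j = {1} := by
  have hconj : ∀ g, ∀ j, ∀ x ∈ KK G₀ G₁ H j, ∃ j', g⁻¹ * x * g ∈ KK G₀ G₁ H j' := by
    refine ha.mul_induction (fun j x hx => ⟨j, by simpa using hx⟩) ?_
    intro i c hc g ih j x hx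
    obtain ⟨j', hj'⟩ := ha.exists_conj_mem_KK hnd hfin hc hx
    obtain ⟨j'', hj''⟩ := ih j' _ hj'
    exact ⟨j'', by simpa [mul_assoc] using hj''⟩
  refine Set.eq_singleton_iff_unique_mem.2 ⟨one_mem_KK, fun x hx => ?_⟩
  rw [← Set.mem_singleton_iff, ← hker]
  exact Set.mem_iInter.2 fun g => KK_subset (hconj g j x hx).choose_spec

end Kernel

def TrivialMeet (H : Subgroup G) (g : G) : Prop := ∀ x ∈ H, g⁻¹ * x * g ∈ H → x = 1

theorem trivialMeet_iff {H : Subgroup G} {g : G} :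
    TrivialMeet H g ↔ (H : Set G) ∩ {x | g⁻¹ * x * g ∈ H} = {1} := by
  refine ⟨fun h => Set.eq_singleton_iff_unique_mem.2 ⟨⟨one_mem H, by simp⟩, fun x hx =>
    h x hx.1 hx.2⟩, fun h x hx hgx => ?_⟩
  have : x ∈ (H : Set G) ∩ {x | g⁻¹ * x * g ∈ H} := ⟨hx, hgx⟩
  rwa [h] at this

namespace IsAmalgam

variable {G₀ G₁ H : Subgroup G} {j m n : ℕ}

theorem exists_trivialMeet (ha : IsAmalgam G₀ G₁ H) (hfin : (H : Set G).Finite)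
    (hK : KK G₀ G₁ H 0 = {1} ∧ KK G₀ G₁ H 1 = {1}) : ∃ g : G, TrivialMeet H g := by
  let I : G → Set G := fun u => (H : Set G) ∩ {x | u⁻¹ * x * u ∈ H}
  obtain ⟨u, hmin⟩ : ∃ u, ∀ v, (I u).ncard ≤ (I v).ncard :=
    ⟨_, fun v => Function.argmin_le (fun u => (I u).ncard) v⟩
  obtain ⟨j, m, hu⟩ := ha.exists_mem_TT u
  refine ⟨u, fun x hx hux => ?_⟩
  have hK' : u⁻¹ * x * u ∈ KK G₀ G₁ H (j + m) := mem_KK_iff.2 fun k g hg => by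
    have hsub : I (u * g) ⊆ I u := fun z hz => ⟨hz.1, ha.conj_mem_of_conj_mul_mem hz.1 hu hg hz.2⟩
    have heq := Set.eq_of_subset_of_ncard_le hsub (hmin _) (hfin.subset Set.inter_subset_left)
    simpa [mul_assoc] using (heq ▸ (⟨hx, hux⟩ : x ∈ I u) : x ∈ I (u * g)).2
  have hK'' : KK G₀ G₁ H (j + m) = {1} := by
    rcases Nat.mod_two_eq_zero_or_one (j + m) with h | h
    · rw [KK_congr (j' := 0) h, hK.1]
    · rw [KK_congr (j' := 1) h, hK.2]
  rw [hK''] at hK'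
  simpa [mul_assoc] using congrArg (fun y => u * y * u⁻¹) hK'

theorem trivialMeet_mul (ha : IsAmalgam G₀ G₁ H) {u v : G} (hu : u ∈ TT G₀ G₁ H j m)
    (hv : v ∈ TT G₀ G₁ H (j + m) n) (h : TrivialMeet H u ∨ TrivialMeet H v) :
    TrivialMeet H (u * v) := by
  intro x hx huv
  have hu' := ha.conj_mem_of_conj_mul_mem hx hu hv huv
  rcases h with h | h
  · exact h x hx hu'
  · have := congrArg (fun y => u * y * u⁻¹) (h _ hu' (by simpa [mul_assoc] using huv))
    simpa [mul_assoc] using this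

end IsAmalgam

/-! ### Ping-pong in the amalgam -/

theorem Subgroup.exists_mem_mul_notMem {H K : Subgroup G} (h1 : H.relIndex K ≠ 1)
    (h2 : H.relIndex K ≠ 2) (g : G) : ∃ c ∈ K, c ∉ H ∧ g * c ∉ H := by
  by_contra! hall
  obtain ⟨a, haK, haH⟩ := Set.not_subset.1 (mt Subgroup.relIndex_eq_one.2 h1)
  refine h2 (Subgroup.index_eq_two_iff.2 ⟨⟨a, haK⟩, fun c => ?_⟩)
  simp only [Subgroup.mem_subgroupOf, Subgroup.coe_mul, xor_iff_iff_not]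
  by_cases hc : (c : G) ∈ H
  · simpa [hc] using fun h => haH (by simpa using mul_mem (inv_mem hc) h)
  · have h₁ := hall _ (inv_mem c.2) (by simpa using hc)
    have h₂ := hall a haK haH
    simpa [hc, mul_assoc] using mul_mem (inv_mem h₁) h₂

theorem Nondegenerate.exists_pingPong_side {G₀ G₁ H : Subgroup G} (hnd : Nondegenerate G₀ G₁ H) :
    ∃ p, (∀ g : G, ∃ c ∈ TT G₀ G₁ H p 1, g * c ∉ H) ∧ ∃ b, b ∈ TT G₀ G₁ H (p + 1) 1 := by
  by_cases h0 : H.relIndex G₀ = 2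
  · refine ⟨1, fun g => ?_, hnd.exists_mem_TT_one 2⟩
    obtain ⟨c, hc, hcH, hgc⟩ :=
      Subgroup.exists_mem_mul_notMem hnd.2.1 (fun h1 => hnd.2.2 ⟨h0, h1⟩) g
    exact ⟨c, mem_TT_one.2 ⟨by simpa [side] using hc, hcH⟩, hgc⟩
  · refine ⟨0, fun g => ?_, hnd.exists_mem_TT_one 1⟩
    obtain ⟨c, hc, hcH, hgc⟩ := Subgroup.exists_mem_mul_notMem hnd.1 h0 g
    exact ⟨c, mem_TT_one.2 ⟨by simpa [side] using hc, hcH⟩, hgc⟩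

/-- Elements whose reduced words have odd length and begin, hence also end, in `side G₀ G₁ p`. -/
def Bracketed (G₀ G₁ H : Subgroup G) (p : ℕ) : Set G := {x | ∃ r, x ∈ TT G₀ G₁ H p (2 * r + 1)}

namespace IsAmalgam

variable {G₀ G₁ H : Subgroup G} {j k m p q r : ℕ} {b x y τ : G}

theorem exists_mul_mem_TT (ha : IsAmalgam G₀ G₁ H) (hc : ∀ g : G, ∃ c ∈ TT G₀ G₁ H p 1, g * c ∉ H)
    (hx : x ∈ TT G₀ G₁ H j (m + 1)) (hm : (j + m) % 2 = p % 2) :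
    ∃ c ∈ TT G₀ G₁ H p 1, x * c ∈ TT G₀ G₁ H j (m + 1) := by
  obtain ⟨y, hy, a, ha', rfl⟩ := ha.mem_TT_succ'.1 hx
  obtain ⟨c, hc', hac⟩ := hc a
  have hac' : a * c ∈ TT G₀ G₁ H (j + m) 1 := by
    refine mem_TT_one.2 ⟨mul_mem (mem_TT_one.1 ha').1 ?_, hac⟩
    rw [side_congr hm]
    exact (mem_TT_one.1 hc').1
  exact ⟨c, hc', by simpa [mul_assoc] using ha.mul_mem_TT hy hac'⟩

theorem exists_conj_mem_TT_of_even (ha : IsAmalgam G₀ G₁ H)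
    (hc : ∀ g : G, ∃ c ∈ TT G₀ G₁ H p 1, g * c ∉ H) (hx : x ∈ TT G₀ G₁ H p (2 * q + 2)) :
    ∃ c ∈ TT G₀ G₁ H p 1, c⁻¹ * x * c ∈ TT G₀ G₁ H p (2 * q + 3) := by
  obtain ⟨c, hc', h⟩ := ha.exists_mul_mem_TT hc (ha.inv_mem_TT hx) (by omega)
  have h' := ha.inv_mem_TT h
  rw [mul_inv_rev, inv_inv] at h'
  exact ⟨c, hc', mem_TT_of_eq (ha.mul_mem_TT (mem_TT_of_mod h' (j' := p) (by omega))
    (mem_TT_of_mod hc' (by omega))) rfl (by omega)⟩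

theorem odd_mul_mem_TT (ha : IsAmalgam G₀ G₁ H) (hx : x ∈ TT G₀ G₁ H k (2 * r + 1))
    (hy : y ∈ TT G₀ G₁ H (k + 1) m) : x * y ∈ TT G₀ G₁ H k (2 * r + 1 + m) :=
  ha.mul_mem_TT hx (mem_TT_of_mod hy (by omega))

theorem notMem_TT_succ_of_mem_TT (ha : IsAmalgam G₀ G₁ H) (hx : x ∈ TT G₀ G₁ H (p + 1) m) :
    x ∉ TT G₀ G₁ H p (k + 1) := fun hx' => by
  obtain rfl := ha.eq_of_mem_TT hx hx'
  have := ha.mod_eq_of_mem_TT hx hx'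
  omega

theorem inv_mem_bracketed (ha : IsAmalgam G₀ G₁ H) (hx : x ∈ Bracketed G₀ G₁ H p) :
    x⁻¹ ∈ Bracketed G₀ G₁ H p :=
  let ⟨r, hx⟩ := hx
  ⟨r, mem_TT_of_mod (ha.inv_mem_TT hx) (by omega)⟩

theorem conj_mem_bracketed (ha : IsAmalgam G₀ G₁ H) {s : G} (hx : x ∈ Bracketed G₀ G₁ H p)
    (hs : s ∈ TT G₀ G₁ H (p + 1) (2 * q)) : s⁻¹ * x * s ∈ Bracketed G₀ G₁ H p :=
  let ⟨r, hx⟩ := hx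
  ⟨2 * q + r, mem_TT_of_mod (ha.conj_mem_TT_odd hx hs) (by omega)⟩

theorem exists_trivialMeet_mem_TT (ha : IsAmalgam G₀ G₁ H)
    (hc : ∀ g : G, ∃ c ∈ TT G₀ G₁ H p 1, g * c ∉ H)
    (hb : b ∈ TT G₀ G₁ H (p + 1) 1) {t : G} (ht : TrivialMeet H t) :
    ∃ τ r, τ ∈ TT G₀ G₁ H (p + 1) (2 * r + 2) ∧ TrivialMeet H τ := by
  obtain ⟨c, hc', -⟩ := hc 1
  obtain ⟨j, m, htm⟩ := ha.exists_mem_TT t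
  rcases m with _ | m
  · refine ⟨b * c, 0, mem_TT_of_eq (ha.mul_mem_TT hb (mem_TT_of_mod hc' (by omega))) rfl rfl,
      fun x hx _ => ht x hx ?_⟩
    have := mem_TT_zero.1 htm
    exact mul_mem (mul_mem (inv_mem this) hx) this
  obtain ⟨t₁, m₁, ht₁, ht₁H⟩ :
      ∃ t₁ m₁, t₁ ∈ TT G₀ G₁ H (p + 1) (m₁ + 1) ∧ TrivialMeet H t₁ := by
    by_cases hj : j % 2 = (p + 1) % 2
    · exact ⟨t, m, mem_TT_of_mod htm hj, ht⟩
    · have htm' : t ∈ TT G₀ G₁ H (p + 1 + 1) (m + 1) := mem_TT_of_mod htm (by omega)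
      exact ⟨b * t, m + 1, by simpa [add_comm] using ha.mul_mem_TT hb htm',
        ha.trivialMeet_mul hb htm' (Or.inr ht)⟩
  obtain ⟨r, rfl | rfl⟩ := Nat.even_or_odd' m₁
  · have hc'' : c ∈ TT G₀ G₁ H (p + 1 + (2 * r + 1)) 1 := mem_TT_of_mod hc' (by omega)
    exact ⟨t₁ * c, r, mem_TT_of_eq (ha.mul_mem_TT ht₁ hc'') rfl rfl,
      ha.trivialMeet_mul ht₁ hc'' (Or.inl ht₁H)⟩
  · exact ⟨t₁, r, ht₁, ht₁H⟩

theorem exists_conj_mem_bracketed_of_even (ha : IsAmalgam G₀ G₁ H)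
    (hc : ∀ g : G, ∃ c ∈ TT G₀ G₁ H p 1, g * c ∉ H) (hb : b ∈ TT G₀ G₁ H (p + 1) 1)
    (hy : y ∈ TT G₀ G₁ H (p + 1) (2 * q + 2)) :
    ∃ c ∈ TT G₀ G₁ H p 1, (b * c)⁻¹ * y * (b * c) ∈ Bracketed G₀ G₁ H p := by
  have e : ∀ c, (b * c)⁻¹ * y * (b * c) = c⁻¹ * (b⁻¹ * y * b) * c := fun c => by group
  simp only [e]
  rcases ha.mul_mem_TT_of_mem_side (inv_mem (mem_TT_one.1 hb).1) hy with h | h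
  · have hz : b⁻¹ * y * b ∈ TT G₀ G₁ H (p + 1) (2 * (q + 1) + 1) :=
      ha.mul_mem_TT h (mem_TT_of_mod hb (by omega))
    obtain ⟨c, hc', -⟩ := hc 1
    exact ⟨c, hc', 1 + (q + 1),
      mem_TT_of_eq (ha.conj_mem_TT_odd hz (mem_TT_of_mod hc' (by omega))) (by omega) rfl⟩
  · have hz : b⁻¹ * y * b ∈ TT G₀ G₁ H p (2 * q + 2) :=
      mem_TT_of_eq (ha.mul_mem_TT h (mem_TT_of_mod hb (by omega))) (by omega) (by omega)
    obtain ⟨c, hc', h'⟩ := ha.exists_conj_mem_TT_of_even hc hz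
    exact ⟨c, hc', q + 1, h'⟩

theorem exists_conj_mem_bracketed (ha : IsAmalgam G₀ G₁ H)
    (hc : ∀ g : G, ∃ c ∈ TT G₀ G₁ H p 1, g * c ∉ H) (hb : b ∈ TT G₀ G₁ H (p + 1) 1)
    (hτ : τ ∈ TT G₀ G₁ H (p + 1) (2 * r + 2)) (hτH : TrivialMeet H τ) (hy : y ≠ 1) :
    ∃ e q, τ * e ∈ TT G₀ G₁ H (p + 1) (2 * q) ∧ e⁻¹ * y * e ∈ Bracketed G₀ G₁ H p := by
  have hτbc : ∀ c ∈ TT G₀ G₁ H p 1, τ * (b * c) ∈ TT G₀ G₁ H (p + 1) (2 * (r + 2)) :=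
    fun c hc' => by
      rw [← mul_assoc]
      exact mem_TT_of_eq (ha.mul_mem_TT (ha.mul_mem_TT hτ (mem_TT_of_mod hb (by omega)))
        (mem_TT_of_mod hc' (by omega))) rfl (by omega)
  obtain ⟨j, m, hy'⟩ := ha.exists_mem_TT y
  rcases m with _ | m
  · refine ⟨τ, 2 * r + 2,
      mem_TT_of_eq (ha.mul_mem_TT hτ (mem_TT_of_mod hτ (by omega))) rfl (by omega), ?_⟩
    rcases ha.conj_mem_or_mem_TT_odd (mem_TT_zero.1 hy') hτ with h | ⟨s, h⟩
    · exact absurd (hτH y (mem_TT_zero.1 hy') h) hy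
    · exact ⟨s, mem_TT_of_mod h (by omega)⟩
  obtain ⟨q, rfl | rfl⟩ := Nat.even_or_odd' m
  · by_cases hj : j % 2 = p % 2
    · exact ⟨1, r + 1, by simpa using mem_TT_of_eq hτ rfl (by omega), q,
        by simpa using mem_TT_of_mod hy' hj⟩
    · obtain ⟨c, hc', hτc⟩ := ha.exists_mul_mem_TT hc hτ (by omega)
      exact ⟨c, r + 1, hτc, 1 + q, mem_TT_of_mod (ha.conj_mem_TT_odd
        (mem_TT_of_mod hy' (j' := p + 1) (by omega)) (mem_TT_of_mod hc' (by omega))) (by omega)⟩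
  · by_cases hj : j % 2 = p % 2
    · obtain ⟨c, hc', h⟩ := ha.exists_conj_mem_bracketed_of_even hc hb
        (mem_TT_of_mod (ha.inv_mem_TT hy') (by omega))
      have e : ((b * c)⁻¹ * y⁻¹ * (b * c))⁻¹ = (b * c)⁻¹ * y * (b * c) := by group
      exact ⟨b * c, r + 2, hτbc c hc', e ▸ ha.inv_mem_bracketed h⟩
    · obtain ⟨c, hc', h⟩ := ha.exists_conj_mem_bracketed_of_even hc hb
        (mem_TT_of_mod hy' (by omega))
      exact ⟨b * c, r + 2, hτbc c hc', h⟩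

theorem exists_conj_forall_mem_bracketed (ha : IsAmalgam G₀ G₁ H)
    (hc : ∀ g : G, ∃ c ∈ TT G₀ G₁ H p 1, g * c ∉ H) (hb : b ∈ TT G₀ G₁ H (p + 1) 1)
    (hτ : τ ∈ TT G₀ G₁ H (p + 1) (2 * r + 2)) (hτH : TrivialMeet H τ) (F : Finset G)
    (hF : 1 ∉ F) : ∃ d, ∀ f ∈ F, d⁻¹ * f * d ∈ Bracketed G₀ G₁ H p := by
  classical
  induction F using Finset.induction_on with
  | empty => exact ⟨1, by simp⟩
  | insert f F _ ih =>
    obtain ⟨d, hd⟩ := ih fun h => hF (Finset.mem_insert_of_mem h)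
    have hf : (d * τ)⁻¹ * f * (d * τ) ≠ 1 := fun h => by
      have := congrArg (fun x => (d * τ) * x * (d * τ)⁻¹) h
      simp only [mul_assoc, mul_inv_cancel_left, mul_one, mul_inv_cancel] at this
      exact hF (this ▸ Finset.mem_insert_self f F)
    -- `e` need only keep the `τ`-conjugates of `Bracketed G₀ G₁ H p` inside it, which holds
    -- as soon as `τ * e` is an even word
    obtain ⟨e, q, hτe, he⟩ := ha.exists_conj_mem_bracketed hc hb hτ hτH hf
    refine ⟨d * τ * e, fun f' hf' => ?_⟩
    rcases Finset.mem_insert.1 hf' with rfl | hf'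
    · simpa [mul_assoc] using he
    · simpa [mul_assoc] using ha.conj_mem_bracketed (hd f' hf') hτe


theorem exists_conj_mem_bracketed_of_ne (ha : IsAmalgam G₀ G₁ H)
    (hc : ∀ g : G, ∃ c ∈ TT G₀ G₁ H p 1, g * c ∉ H) (hb : b ∈ TT G₀ G₁ H (p + 1) 1)
    (hτ : τ ∈ TT G₀ G₁ H (p + 1) (2 * r + 2)) (hτH : TrivialMeet H τ) (F : Finset G) :
    ∃ d, (∀ f ∈ F, f ≠ 1 → d⁻¹ * f * d ∈ Bracketed G₀ G₁ H p) ∧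
      ∀ f ∈ F, ∀ f' ∈ F, f ≠ f' → d⁻¹ * (f⁻¹ * f') * d ∈ Bracketed G₀ G₁ H p := by
  classical
  obtain ⟨d, hd⟩ := ha.exists_conj_forall_mem_bracketed hc hb hτ hτH
    ((F ∪ (F ×ˢ F).image fun f => f.1⁻¹ * f.2).erase 1) (Finset.notMem_erase 1 _)
  refine ⟨d, fun f hf hf1 => hd f (Finset.mem_erase.2 ⟨hf1, Finset.mem_union_left _ hf⟩),
    fun f hf f' hf' hff' => hd _ (Finset.mem_erase.2 ⟨fun h => hff' (inv_mul_eq_one.1 h), ?_⟩)⟩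
  exact Finset.mem_union_right _ (Finset.mem_image.2 ⟨(f, f'), Finset.mem_product.2 ⟨hf, hf'⟩, rfl⟩)

theorem pow_mem_TT (ha : IsAmalgam G₀ G₁ H) (hx : x ∈ TT G₀ G₁ H j 2) :
    ∀ n, x ^ n ∈ TT G₀ G₁ H j (2 * n)
  | 0 => by simpa using mem_TT_zero.2 (one_mem H)
  | n + 1 => by
    rw [pow_succ]
    exact mem_TT_of_eq (ha.mul_mem_TT (ha.pow_mem_TT hx n) (mem_TT_of_mod hx (by omega))) rfl
      (by omega)

theorem inv_mul_mem_bracketed_succ (ha : IsAmalgam G₀ G₁ H) {α β : G}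
    (hα : α ∈ TT G₀ G₁ H p 1) (hβ : β ∈ TT G₀ G₁ H p 1) (hαβ : α⁻¹ * β ∉ H)
    (hb : b ∈ TT G₀ G₁ H (p + 1) 1) (i n : ℕ) :
    (b * ((α * b) ^ i * β) * b)⁻¹ * (b * ((α * b) ^ (i + n + 1) * β) * b) ∈
      Bracketed G₀ G₁ H (p + 1) := by
  have e : (b * ((α * b) ^ i * β) * b)⁻¹ * (b * ((α * b) ^ (i + n + 1) * β) * b) =
      b⁻¹ * (β⁻¹ * α * (b * α) ^ n * b * β) * b := by
    calc _ = b⁻¹ * (β⁻¹ * ((α * b) ^ n * α) * b * β) * b := by rw [pow_succ, pow_add]; group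
      _ = _ := by rw [mul_pow_mul]; group
  have hβα : β⁻¹ * α ∈ TT G₀ G₁ H p 1 :=
    mem_TT_one.2 ⟨mul_mem (inv_mem (mem_TT_one.1 hβ).1) (mem_TT_one.1 hα).1,
      fun h => hαβ (by simpa using inv_mem h)⟩
  have hbα : b * α ∈ TT G₀ G₁ H (p + 1) 2 :=
    mem_TT_of_eq (ha.mul_mem_TT hb (mem_TT_of_mod hα (by omega))) rfl rfl
  have h₁ := ha.mul_mem_TT hβα (ha.pow_mem_TT hbα n)
  have h₂ := ha.mul_mem_TT h₁ (mem_TT_of_mod hb (by omega))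
  have h₃ := ha.mul_mem_TT h₂ (mem_TT_of_mod hβ (by omega))
  exact e ▸ ⟨1 + (n + 1), ha.conj_mem_TT_odd (mem_TT_of_eq h₃ rfl (by omega)) hb⟩

theorem isPowersGroup_of_trivialMeet (ha : IsAmalgam G₀ G₁ H) (hnd : Nondegenerate G₀ G₁ H) {t : G}
    (ht : TrivialMeet H t) : IsPowersGroup G := by
  obtain ⟨p, hc, b, hb⟩ := hnd.exists_pingPong_side
  obtain ⟨τ, r, hτ, hτH⟩ := ha.exists_trivialMeet_mem_TT hc hb ht
  obtain ⟨α, hα, -⟩ := hc 1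
  obtain ⟨β, hβ, hαβ⟩ := hc α⁻¹
  set g : ℕ → G := fun i => b * ((α * b) ^ i * β) * b
  have hg : ∀ i j, i < j → ∀ x y, (∃ m, x ∈ TT G₀ G₁ H p (m + 1)) →
      (∃ m, y ∈ TT G₀ G₁ H p (m + 1)) → g i * x ≠ g j * y := by
    rintro i _ hij x y ⟨m, hx⟩ ⟨m', hy⟩ h
    obtain ⟨n, rfl⟩ := Nat.exists_eq_add_of_lt hij
    obtain ⟨s, hs⟩ := ha.inv_mul_mem_bracketed_succ hα hβ hαβ hb i n
    have hxy : x = (g i)⁻¹ * g (i + n + 1) * y := by rw [mul_assoc, ← h]; group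
    exact ha.notMem_TT_succ_of_mem_TT
      (hxy ▸ ha.odd_mul_mem_TT hs (mem_TT_of_mod hy (by omega))) hx
  refine isPowersGroup_of_pingPong (A := Bracketed G₀ G₁ H p)
    (D := {x | ∃ m, x ∈ TT G₀ G₁ H (p + 1) m}) (E := {x | ∃ m, x ∈ TT G₀ G₁ H p (m + 1)}) g
    (fun x => ?_) ?_ ?_ ?_ (ha.exists_conj_forall_mem_bracketed hc hb hτ hτH)
  · obtain ⟨j, m, hx⟩ := ha.exists_mem_TT x
    rcases m with _ | m
    · exact Or.inl ⟨0, mem_TT_zero.2 (mem_TT_zero.1 hx)⟩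
    by_cases hj : j % 2 = p % 2
    · exact Or.inr ⟨m, mem_TT_of_mod hx hj⟩
    · exact Or.inl ⟨m + 1, mem_TT_of_mod hx (by omega)⟩
  · rintro x ⟨m, hx⟩ ⟨n, hx'⟩
    exact ha.notMem_TT_succ_of_mem_TT hx hx'
  · rintro a ⟨r, ha'⟩ x ⟨m, hx⟩
    exact ⟨2 * r + m, mem_TT_of_eq (ha.odd_mul_mem_TT ha' hx) rfl (by omega)⟩
  · intro i j hij x hx y hy
    rcases lt_or_gt_of_ne hij with h | h
    · exact hg i j h x y hx hy
    · exact fun e => hg j i h y x hy hx e.symm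

theorem exists_mul_conj_mem_TT (ha : IsAmalgam G₀ G₁ H) {γ : G}
    (hτ : τ ∈ TT G₀ G₁ H (p + 1) (2 * r + 2)) (hb : b ∈ TT G₀ G₁ H (p + 1) 1)
    (hγ : γ ∈ TT G₀ G₁ H p 1) (hτγ : τ * γ ∈ TT G₀ G₁ H (p + 1) (2 * r + 2))
    (hy : y = 1 ∨ y ∈ Bracketed G₀ G₁ H p) :
    ∃ k, τ * b * γ⁻¹ * (τ⁻¹ * y * τ) ∈ TT G₀ G₁ H (p + 1) (2 * k + 2) := by
  have hτb := ha.mul_mem_TT hτ (mem_TT_of_mod hb (by omega))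
  rcases hy with rfl | ⟨q, hy⟩
  · refine ⟨r + 1, ?_⟩
    rw [mul_one, inv_mul_cancel, mul_one]
    exact mem_TT_of_eq (ha.mul_mem_TT hτb (mem_TT_of_mod (ha.inv_mem_TT hγ) (by omega))) rfl
      (by omega)
  -- by `hτγ`, `γ⁻¹ * τ⁻¹ = (τ * γ)⁻¹` still has the length of `τ`, so nothing cancels
  have e : τ * b * γ⁻¹ * (τ⁻¹ * y * τ) = τ * b * (τ * γ)⁻¹ * y * τ := by group
  have h₁ := ha.mul_mem_TT hτb (mem_TT_of_mod (ha.inv_mem_TT hτγ) (by omega))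
  have h₂ := ha.mul_mem_TT h₁ (mem_TT_of_mod hy (by omega))
  have h₃ := ha.mul_mem_TT h₂ (mem_TT_of_mod hτ (by omega))
  exact ⟨3 * r + q + 3, e ▸ mem_TT_of_eq h₃ rfl (by omega)⟩

theorem hasFreeSemigroupProperty_of_trivialMeet (ha : IsAmalgam G₀ G₁ H)
    (hnd : Nondegenerate G₀ G₁ H) {t : G} (ht : TrivialMeet H t) : HasFreeSemigroupProperty G := by
  obtain ⟨p, hc, b, hb⟩ := hnd.exists_pingPong_side
  obtain ⟨τ, r, hτ, hτH⟩ := ha.exists_trivialMeet_mem_TT hc hb ht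
  obtain ⟨γ, hγ, hτγ⟩ := ha.exists_mul_mem_TT hc hτ (by omega)
  intro F
  obtain ⟨d, hd₁, hd₂⟩ := ha.exists_conj_mem_bracketed_of_ne hc hb hτ hτH F
  set s := d * τ
  set Γ := τ * b * γ⁻¹
  have hblock : ∀ f ∈ F, ∃ k, Γ * (s⁻¹ * f * s) ∈ TT G₀ G₁ H (p + 1) (2 * k + 2) := by
    intro f hf
    have e : s⁻¹ * f * s = τ⁻¹ * (d⁻¹ * f * d) * τ := by simp only [s]; group
    refine e ▸ ha.exists_mul_conj_mem_TT hτ hb hγ hτγ ?_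
    by_cases hf1 : f = 1
    · exact Or.inl (by simp [hf1])
    · exact Or.inr (hd₁ f hf hf1)
  have hcross : ∀ f ∈ F, ∀ f' ∈ F, f ≠ f' →
      (s⁻¹ * f * s)⁻¹ * (s⁻¹ * f' * s) ∈ Bracketed G₀ G₁ H p := by
    intro f hf f' hf' hff'
    convert ha.conj_mem_bracketed (hd₂ f hf f' hf' hff')
      (mem_TT_of_eq hτ rfl (show _ = 2 * (r + 1) by ring)) using 1
    simp only [s]
    group
  -- after conjugation by `s`, the letters `Γ * (s⁻¹ * f * s)` play ping-pong on the set of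
  -- elements whose reduced words start in `side (p + 1)`
  refine ⟨s * Γ * s⁻¹, fun w₁ w₂ _ _ hw₁ hw₂ h => eq_of_prod_eq_of_conj_pingPong s
    (Y := {x | ∃ m, x ∈ TT G₀ G₁ H (p + 1) m}) ⟨0, mem_TT_zero.2 (one_mem H)⟩ ?_ ?_ hw₁ hw₂ h⟩
  · rintro _ ⟨f, hf, rfl⟩ y ⟨m, hy⟩
    obtain ⟨k, hk⟩ := hblock f hf
    have hky := ha.mul_mem_TT hk (mem_TT_of_mod hy (by omega))
    have e : s⁻¹ * (s * Γ * s⁻¹ * f) * s = Γ * (s⁻¹ * f * s) := by group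
    rw [e]
    exact ⟨⟨_, hky⟩, fun h1 => ha.notMem_of_mem_TT_succ (k := 2 * k + 1 + m)
      (mem_TT_of_eq hky rfl (by omega)) (h1 ▸ one_mem H)⟩
  · rintro _ ⟨f, hf, rfl⟩ _ ⟨f', hf', rfl⟩ y ⟨m, hy⟩ y' ⟨m', hy'⟩ h
    by_cases hff' : f = f'
    · rw [hff']
    obtain ⟨q, hq⟩ := hcross f hf f' hf' hff'
    have h' : Γ * ((s⁻¹ * f * s) * y) = Γ * ((s⁻¹ * f' * s) * y') := by
      convert h using 1 <;> group
    have hyy' : y = (s⁻¹ * f * s)⁻¹ * (s⁻¹ * f' * s) * y' := by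
      rw [mul_assoc, ← mul_left_cancel h']
      group
    exact absurd (hyy' ▸ mem_TT_of_eq (ha.odd_mul_mem_TT hq hy') (j' := p) rfl
      (show _ = 2 * q + m' + 1 by omega)) (ha.notMem_TT_succ_of_mem_TT hy)

end IsAmalgam

/-- Let `G = G₀ *_H G₁` be a nondegenerate free product with amalgamation with `H` finite.
Then the following are equivalent:
(i) `G` is icc; (ii) `ker G = {e}`; (iii) `K₀ = K₁ = {e}`; (iv) `G` is a Powers group;
(v) there exists `g ∈ G` with `H ∩ g H g⁻¹ = {e}`; (vi) `G` has the free semigroup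
property. -/
theorem finite_amalgam_tfae {G : Type*} [Group G] (G₀ G₁ H : Subgroup G)
    (ha : IsAmalgam G₀ G₁ H) (hnd : Nondegenerate G₀ G₁ H)
    (hfin : (H : Set G).Finite) :
    List.TFAE
      [ IsIcc G,
        amalgamKerSet H = {1},
        KK G₀ G₁ H 0 = {1} ∧ KK G₀ G₁ H 1 = {1},
        IsPowersGroup G,
        ∃ g : G, (H : Set G) ∩ {x | g⁻¹ * x * g ∈ H} = {1},
        HasFreeSemigroupProperty G ] := by
  have hcore : (H.normalCore : Set G).Finite := hfin.subset H.normalCore_le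
  tfae_have 1 → 2 := fun h => amalgamKerSet_eq_one_iff.2 (h.eq_bot_of_finite hcore)
  tfae_have 2 → 3 := fun h => ⟨ha.KK_eq_one hnd hfin h 0, ha.KK_eq_one hnd hfin h 1⟩
  tfae_have 3 → 5 := fun h => (ha.exists_trivialMeet hfin h).imp fun _ => trivialMeet_iff.1
  tfae_have 5 → 4 := fun ⟨_, ht⟩ => ha.isPowersGroup_of_trivialMeet hnd (trivialMeet_iff.2 ht)
  tfae_have 4 → 1 := IsPowersGroup.isIcc
  tfae_have 5 → 6 := fun ⟨_, ht⟩ =>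
    ha.hasFreeSemigroupProperty_of_trivialMeet hnd (trivialMeet_iff.2 ht)
  tfae_have 6 → 2 := fun h => amalgamKerSet_eq_one_iff.2 (h.eq_bot_of_finite hcore)
  tfae_finish
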